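/- arXiv:2209.01376 — 4 statements merged into one kernel-verified Lean document; each statement's English description precedes it below -/
import Mathlib

section
/- Let n, m, k ≥ 1, λ > 0, o ∈ ℝⁿ, D an m×n real matrix, M a k×m real matrix, and let g₁ : ℝᵐ → ℝ and g₂ : ℝᵐ → ℝ be convex functions. If the matrix H = λIₙ − Dᵀ Mᵀ M D is positive semidefinite, then the function J̃(x, y) = (λ/2)‖x − o‖₂² − (1/2)‖M D x‖₂² + (1/2)‖M y‖₂² + g₁(D x) + g₂(Mᵀ M (D x − y)) is convex on ℝⁿ × ℝᵐ. -/
/-!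
With `H = λI - (MD)ᵀ(MD)`, the `x`-part `(λ/2)‖x - o‖² - (1/2)‖MDx‖²` equals `(1/2) xᵀHx` plus an
affine function of `x`, and `(1/2)‖My‖² = (1/2) yᵀ(MᵀM)y`. Quadratic forms of positive semidefinite
matrices are convex, and so are `g₁`, `g₂` precomposed with the linear maps `(x, y) ↦ Dx` and
`(x, y) ↦ MᵀM(Dx - y)`; `J̃` is the sum of these convex pieces.
-/

open Matrix

namespace Matrix

variable {ι κ : Type*} [Fintype ι] [Fintype κ]

theorem PosSemidef.convexOn_dotProduct_mulVec {H : Matrix ι ι ℝ} (hH : H.PosSemidef) :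
    ConvexOn ℝ Set.univ fun x => x ⬝ᵥ H *ᵥ x := by
  refine ⟨convex_univ, fun x _ y _ a b ha hb hab => ?_⟩
  have hsymm : y ⬝ᵥ H *ᵥ x = x ⬝ᵥ H *ᵥ y := by
    rw [dotProduct_mulVec, ← mulVec_transpose, ← conjTranspose_eq_transpose_of_trivial, hH.1.eq,
      dotProduct_comm]
  have hxy : 0 ≤ (x - y) ⬝ᵥ H *ᵥ (x - y) := by simpa using hH.dotProduct_mulVec_nonneg (x - y)
  obtain rfl : b = 1 - a := by linarith
  -- `a q(x) + (1 - a) q(y) - q(a x + (1 - a) y) = a (1 - a) q(x - y)` for symmetric `H`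
  simp only [mulVec_sub, mulVec_add, mulVec_smul, dotProduct_sub, sub_dotProduct, dotProduct_add,
    add_dotProduct, dotProduct_smul, smul_dotProduct, smul_eq_mul, hsymm] at hxy ⊢
  nlinarith [mul_nonneg ha hb]

theorem sum_mulVec_sq (A : Matrix κ ι ℝ) (v : ι → ℝ) :
    ∑ j, (A *ᵥ v) j ^ 2 = v ⬝ᵥ (Aᵀ * A) *ᵥ v := by
  rw [← mulVec_mulVec, dotProduct_mulVec, vecMul_transpose]
  simp only [dotProduct, sq]

theorem sum_sub_sq_sub_sum_mulVec_sq [DecidableEq ι] (lam : ℝ) (o x : ι → ℝ) (A : Matrix κ ι ℝ) :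
    lam / 2 * ∑ i, (x i - o i) ^ 2 - 1 / 2 * ∑ j, (A *ᵥ x) j ^ 2
      = 1 / 2 * (x ⬝ᵥ (lam • 1 - Aᵀ * A) *ᵥ x) + (-lam * (o ⬝ᵥ x) + lam / 2 * (o ⬝ᵥ o)) := by
  have hsq : ∑ i, (x i - o i) ^ 2 = (x - o) ⬝ᵥ (x - o) := by
    simp only [dotProduct, sq, Pi.sub_apply]
  rw [sum_mulVec_sq, hsq]
  simp only [sub_mulVec, smul_mulVec, one_mulVec, dotProduct_sub, sub_dotProduct,
    dotProduct_smul, smul_eq_mul, dotProduct_comm x o]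
  ring

end Matrix

theorem stmt4_general (n m k : ℕ)
    (lam : ℝ) (o : Fin n → ℝ)
    (D : Matrix (Fin m) (Fin n) ℝ) (M : Matrix (Fin k) (Fin m) ℝ)
    (g₁ g₂ : (Fin m → ℝ) → ℝ)
    (hg₁ : ConvexOn ℝ Set.univ g₁) (hg₂ : ConvexOn ℝ Set.univ g₂)
    (hH : (lam • (1 : Matrix (Fin n) (Fin n) ℝ) - Dᵀ * Mᵀ * M * D).PosSemidef) :
    ConvexOn ℝ Set.univ (fun p : (Fin n → ℝ) × (Fin m → ℝ) =>
      lam / 2 * ∑ i, (p.1 i - o i) ^ 2 - 1 / 2 * ∑ j, M.mulVec (D.mulVec p.1) j ^ 2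
        + 1 / 2 * ∑ j, M.mulVec p.2 j ^ 2 + g₁ (D.mulVec p.1)
        + g₂ ((Mᵀ * M).mulVec (D.mulVec p.1 - p.2))) := by
  rw [show Dᵀ * Mᵀ * M * D = (M * D)ᵀ * (M * D) by simp only [transpose_mul, Matrix.mul_assoc]]
    at hH
  have hMM : (Mᵀ * M).PosSemidef := by simpa using posSemidef_conjTranspose_mul_self M
  let fst := LinearMap.fst ℝ (Fin n → ℝ) (Fin m → ℝ)
  let snd := LinearMap.snd ℝ (Fin n → ℝ) (Fin m → ℝ)
  have hquad_x := (hH.convexOn_dotProduct_mulVec.comp_linearMap fst).smul one_half_pos.le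
  have haffine := (LinearMap.convexOn (-lam • dotProductBilin ℝ ℝ o ∘ₗ fst) convex_univ).add_const
    (lam / 2 * (o ⬝ᵥ o))
  have hquad_y := (hMM.convexOn_dotProduct_mulVec.comp_linearMap snd).smul one_half_pos.le
  refine ((((hquad_x.add haffine).add hquad_y).add (hg₁.comp_linearMap (D.mulVecLin ∘ₗ fst))).add
    (hg₂.comp_linearMap ((Mᵀ * M).mulVecLin ∘ₗ (D.mulVecLin ∘ₗ fst - snd)))).congr fun p _ => ?_
  rw [mulVec_mulVec, sum_sub_sq_sub_sum_mulVec_sq, sum_mulVec_sq]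
  rfl

/-- If `H = λIₙ - DᵀMᵀMD` is positive semidefinite and `g₁, g₂` are convex, then
`J̃(x,y) = (λ/2)‖x-o‖₂² - (1/2)‖MDx‖₂² + (1/2)‖My‖₂² + g₁(Dx) + g₂(MᵀM(Dx - y))`
is (jointly) convex on `ℝⁿ × ℝᵐ`. -/
theorem stmt4 (n m k : ℕ) (hn : 1 ≤ n) (hm : 1 ≤ m) (hk : 1 ≤ k)
    (lam : ℝ) (hlam : 0 < lam) (o : Fin n → ℝ)
    (D : Matrix (Fin m) (Fin n) ℝ) (M : Matrix (Fin k) (Fin m) ℝ)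
    (g₁ g₂ : (Fin m → ℝ) → ℝ)
    (hg₁ : ConvexOn ℝ Set.univ g₁) (hg₂ : ConvexOn ℝ Set.univ g₂)
    (hH : (lam • (1 : Matrix (Fin n) (Fin n) ℝ) - Dᵀ * Mᵀ * M * D).PosSemidef) :
    ConvexOn ℝ Set.univ (fun p : (Fin n → ℝ) × (Fin m → ℝ) =>
      lam / 2 * ∑ i, (p.1 i - o i) ^ 2 - 1 / 2 * ∑ j, M.mulVec (D.mulVec p.1) j ^ 2
        + 1 / 2 * ∑ j, M.mulVec p.2 j ^ 2 + g₁ (D.mulVec p.1)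
        + g₂ ((Mᵀ * M).mulVec (D.mulVec p.1 - p.2))) :=
  stmt4_general n m k lam o D M g₁ g₂ hg₁ hg₂ hH
end

section
/- Let m, k ≥ 1, let φ : ℝᵐ → ℝ be convex, and let M be a k×m real matrix whose associated linear map is injective (equivalently, Mᵀ M is positive definite). Define the convex conjugate φ* : ℝᵐ → ℝ ∪ {+∞} by φ*(s) = sup over t ∈ ℝᵐ of ( ⟨s, t⟩ − φ(t) ). Then for every u ∈ ℝᵐ, the infimum over y ∈ ℝᵐ of ( (1/2)‖M y‖₂² + φ*(Mᵀ M (u − y)) ), taken in ℝ ∪ {+∞}, equals (1/2)‖M u‖₂² − inf over t ∈ ℝᵐ of ( φ(t) + (1/2)‖M(u − t)‖₂² ). (This identity underlies the convex reformulation of the CNC problem with a dual variable y.) -/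
/-!
Write `g t = φ t + ½‖M(u - t)‖²`. Completing the square,
`½‖My‖² + ⟨MᵀM(u - y), t⟩ - φ t = ½‖Mu‖² - g t + ½‖M(t - y)‖²`,
so the left-hand side is `inf_y sup_t (½‖Mu‖² - g t + ½‖M(t - y)‖²)`. Testing `t = p` for a
minimizer `p` of `g` bounds every `sup_t` below by `½‖Mu‖² - g p`. Conversely, `g` is convex plus the quadratic
`½‖M(u - ·)‖²`, so the first-order condition at `p` gives `g t ≥ g p + ½‖M(t - p)‖²`, and `y = p`
attains the bound. A minimizer exists because `g` is continuous and coercive: `φ` has a continuous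
affine minorant and injectivity of `M` gives `‖Mx‖ ≥ c‖x‖` with `c > 0`.
-/

open Matrix Set Filter Function
open scoped RealInnerProductSpace

theorem EReal.coe_add_iSup {ι : Sort*} (a : ℝ) (f : ι → EReal) :
    (a : EReal) + ⨆ i, f i = ⨆ i, ((a : EReal) + f i) :=
  Monotone.map_iSup_of_continuousAt
    ((EReal.continuousAt_add (by simp) (by simp)).comp
      (by fun_prop : Continuous fun x : EReal => ((a : EReal), x)).continuousAt)
    (monotone_id.const_add _) (by simp)

theorem half_norm_sq_add_inner_sub_eq {F : Type*} [NormedAddCommGroup F] [InnerProductSpace ℝ F]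
    (u y t : F) :
    1 / 2 * ‖y‖ ^ 2 + ⟪u - y, t⟫ = 1 / 2 * ‖u‖ ^ 2 - 1 / 2 * ‖u - t‖ ^ 2 + 1 / 2 * ‖t - y‖ ^ 2 := by
  simp only [inner_sub_left, norm_sub_sq_real, real_inner_comm y t]
  ring

theorem Matrix.transpose_mul_self_mulVec_dotProduct {R m n : Type*} [CommSemiring R] [Fintype m]
    [Fintype n] (M : Matrix m n R) (a b : n → R) :
    (Mᵀ * M) *ᵥ a ⬝ᵥ b = M *ᵥ a ⬝ᵥ M *ᵥ b := by
  rw [← mulVec_mulVec, mulVec_transpose, ← dotProduct_mulVec]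

section Optimality

variable {E F : Type*} [AddCommGroup E] [Module ℝ E] [NormedAddCommGroup F]
  [InnerProductSpace ℝ F] {φ : E → ℝ} (A : E →ₗ[ℝ] F) {u x : E}

theorem ConvexOn.inner_le_sub_of_forall_le (hφ : ConvexOn ℝ univ φ)
    (hx : ∀ t, φ x + 1 / 2 * ‖A (u - x)‖ ^ 2 ≤ φ t + 1 / 2 * ‖A (u - t)‖ ^ 2) (t : E) :
    ⟪A (u - x), A (t - x)⟫ ≤ φ t - φ x := by
  set w := A (u - x)
  set d := A (t - x)
  -- Compare `x` with `x + l • (t - x)`: after dividing by `l`, only a term `O(l)` separates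
  -- the slope from the claim; then let `l → 0⁺`.
  have hslope : ∀ l ∈ Ioc (0 : ℝ) 1, 0 ≤ φ t - φ x - ⟪w, d⟫ + l * (1 / 2 * ‖d‖ ^ 2) := by
    rintro l ⟨hl0, hl1⟩
    have hconv : φ (x + l • (t - x)) ≤ (1 - l) * φ x + l * φ t := by
      have := hφ.2 (mem_univ x) (mem_univ t) (by linarith : (0 : ℝ) ≤ 1 - l) hl0.le
        (sub_add_cancel 1 l)
      rwa [show (1 - l) • x + l • t = x + l • (t - x) by module] at this
    have hexp : ‖A (u - (x + l • (t - x)))‖ ^ 2 = ‖w‖ ^ 2 - 2 * l * ⟪w, d⟫ + l ^ 2 * ‖d‖ ^ 2 := by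
      rw [show u - (x + l • (t - x)) = (u - x) - l • (t - x) by abel, map_sub, map_smul,
        norm_sub_sq_real, inner_smul_right, norm_smul, Real.norm_eq_abs, mul_pow, sq_abs]
      ring
    have hmin := hx (x + l • (t - x))
    rw [hexp] at hmin
    have : 0 ≤ l * (φ t - φ x - ⟪w, d⟫ + l * (1 / 2 * ‖d‖ ^ 2)) := by nlinarith
    exact nonneg_of_mul_nonneg_right this hl0
  have hlim : Tendsto (fun l : ℝ => φ t - φ x - ⟪w, d⟫ + l * (1 / 2 * ‖d‖ ^ 2))
      (nhdsWithin 0 (Ioi 0)) (nhds (φ t - φ x - ⟪w, d⟫ + 0 * (1 / 2 * ‖d‖ ^ 2))) :=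
    (Continuous.tendsto (by fun_prop) _).mono_left nhdsWithin_le_nhds
  have := ge_of_tendsto hlim (eventually_of_mem (Ioc_mem_nhdsGT one_pos) hslope)
  linarith

theorem ConvexOn.add_half_norm_sq_le_of_forall_le (hφ : ConvexOn ℝ univ φ)
    (hx : ∀ t, φ x + 1 / 2 * ‖A (u - x)‖ ^ 2 ≤ φ t + 1 / 2 * ‖A (u - t)‖ ^ 2) (t : E) :
    φ x + 1 / 2 * ‖A (u - x)‖ ^ 2 + 1 / 2 * ‖A (t - x)‖ ^ 2 ≤ φ t + 1 / 2 * ‖A (u - t)‖ ^ 2 := by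
  have hsplit : A (u - t) = A (u - x) - A (t - x) := by rw [← map_sub, sub_sub_sub_cancel_right]
  rw [hsplit, norm_sub_sq_real]
  linarith [hφ.inner_le_sub_of_forall_le A hx t]

end Optimality

section Existence

variable {E F : Type*} [NormedAddCommGroup E] [NormedSpace ℝ E] [FiniteDimensional ℝ E]
  [NormedAddCommGroup F] [InnerProductSpace ℝ F] {φ : E → ℝ}

theorem ConvexOn.exists_continuousLinearMap_add_const_le (hφ : ConvexOn ℝ univ φ) :
    ∃ (l : E →L[ℝ] ℝ) (b : ℝ), ∀ t, l t + b ≤ φ t := by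
  obtain ⟨l, b, hle, -⟩ := hφ.exists_affine_le_of_lt (𝕜 := ℝ) (mem_univ 0) (sub_one_lt (φ 0))
    isClosed_univ (hφ.continuousOn isOpen_univ).lowerSemicontinuousOn
  exact ⟨l, b, fun t => by simpa using hle ⟨t, mem_univ t⟩⟩

theorem ConvexOn.tendsto_add_half_norm_sq_cocompact (hφ : ConvexOn ℝ univ φ)
    {A : E →ₗ[ℝ] F} (hA : Injective A) (u : E) :
    Tendsto (fun t => φ t + 1 / 2 * ‖A (u - t)‖ ^ 2) (cocompact E) atTop := by
  obtain ⟨l, b, hlb⟩ := hφ.exists_continuousLinearMap_add_const_le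
  obtain ⟨K, -, hK⟩ := A.injective_iff_antilipschitz.mp hA
  obtain ⟨c, hc, hcA⟩ := antilipschitzWith_iff_exists_mul_le_norm.mp ⟨K, hK⟩
  have hquad : Tendsto (fun r : ℝ => 1 / 2 * c ^ 2 * (r - ‖u‖) ^ 2 - ‖l‖ * r + b) atTop atTop := by
    have h : Tendsto (fun r : ℝ => r - ‖u‖) atTop atTop :=
      tendsto_atTop_add_const_right _ _ tendsto_id
    refine ((h.atTop_mul_atTop₀ (tendsto_atTop_add_const_right _ (-‖l‖)
      (h.const_mul_atTop (by positivity : 0 < 1 / 2 * c ^ 2)))).atTop_add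
      (tendsto_const_nhds (x := b - ‖l‖ * ‖u‖))).congr fun r => ?_
    ring
  refine tendsto_atTop_mono (fun t => ?_) (hquad.comp tendsto_norm_cocompact_atTop)
  have hl : -(‖l‖ * ‖t‖) ≤ l t := neg_le_of_abs_le (by simpa using l.le_opNorm t)
  have hdist : (‖t‖ - ‖u‖) ^ 2 ≤ ‖u - t‖ ^ 2 := by
    rw [norm_sub_rev]
    exact sq_le_sq' (by linarith [norm_sub_norm_le u t, norm_sub_rev u t]) (norm_sub_norm_le t u)
  have hAc : c ^ 2 * ‖u - t‖ ^ 2 ≤ ‖A (u - t)‖ ^ 2 := by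
    rw [← mul_pow]
    exact pow_le_pow_left₀ (by positivity) (hcA _) 2
  simp only [Function.comp_apply]
  nlinarith [hlb t]

theorem ConvexOn.exists_forall_add_half_norm_sq_le (hφ : ConvexOn ℝ univ φ)
    {A : E →ₗ[ℝ] F} (hA : Injective A) (u : E) :
    ∃ x, ∀ t, φ x + 1 / 2 * ‖A (u - x)‖ ^ 2 ≤ φ t + 1 / 2 * ‖A (u - t)‖ ^ 2 := by
  have : Continuous φ := continuousOn_univ.mp (hφ.continuousOn isOpen_univ)
  have : Continuous A := A.continuous_of_finiteDimensional
  exact Continuous.exists_forall_le (by fun_prop) (hφ.tendsto_add_half_norm_sq_cocompact hA u)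

theorem ConvexOn.iInf_half_norm_sq_add_iSup_inner_sub_eq (hφ : ConvexOn ℝ univ φ)
    {A : E →ₗ[ℝ] F} (hA : Injective A) (u : E) :
    ⨅ y, ((1 / 2 * ‖A y‖ ^ 2 : ℝ) : EReal) + ⨆ t, ((⟪A (u - y), A t⟫ - φ t : ℝ) : EReal)
      = ((1 / 2 * ‖A u‖ ^ 2 - sInf (range fun t => φ t + 1 / 2 * ‖A (u - t)‖ ^ 2) : ℝ) :
          EReal) := by
  obtain ⟨x, hx⟩ := hφ.exists_forall_add_half_norm_sq_le hA u
  have hinf : sInf (range fun t => φ t + 1 / 2 * ‖A (u - t)‖ ^ 2)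
      = φ x + 1 / 2 * ‖A (u - x)‖ ^ 2 :=
    IsLeast.csInf_eq ⟨⟨x, rfl⟩, forall_mem_range.mpr hx⟩
  have hsplit (y t : E) : 1 / 2 * ‖A y‖ ^ 2 + (⟪A (u - y), A t⟫ - φ t)
      = 1 / 2 * ‖A u‖ ^ 2 - (φ t + 1 / 2 * ‖A (u - t)‖ ^ 2) + 1 / 2 * ‖A (t - y)‖ ^ 2 := by
    rw [map_sub, map_sub, map_sub]
    linarith [half_norm_sq_add_inner_sub_eq (A u) (A y) (A t)]
  simp_rw [EReal.coe_add_iSup, ← EReal.coe_add, hsplit, hinf]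
  refine le_antisymm (iInf_le_of_le x (iSup_le fun t => ?_)) (le_iInf fun y => le_iSup_of_le x ?_)
    <;> rw [EReal.coe_le_coe_iff]
  · linarith [hφ.add_half_norm_sq_le_of_forall_le A hx t]
  · linarith [sq_nonneg ‖A (x - y)‖]

end Existence

theorem stmt8_general (m k : ℕ)
    (φ : (Fin m → ℝ) → ℝ) (hφconv : ConvexOn ℝ Set.univ φ)
    (M : Matrix (Fin k) (Fin m) ℝ)
    (hM : Function.Injective fun x : Fin m → ℝ => M.mulVec x)
    (u : Fin m → ℝ) :
    (⨅ y : Fin m → ℝ,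
      (((1 / 2 * ∑ j, M.mulVec y j ^ 2 : ℝ) : EReal) +
        ⨆ t : Fin m → ℝ,
          (((∑ i, (Mᵀ * M).mulVec (u - y) i * t i) - φ t : ℝ) : EReal)))
    = ((1 / 2 * ∑ j, M.mulVec u j ^ 2
        - sInf (Set.range fun t : Fin m → ℝ =>
            φ t + 1 / 2 * ∑ j, M.mulVec (u - t) j ^ 2) : ℝ) : EReal) := by
  let A : (Fin m → ℝ) →ₗ[ℝ] EuclideanSpace ℝ (Fin k) :=
    (WithLp.linearEquiv 2 ℝ (Fin k → ℝ)).symm.toLinearMap ∘ₗ M.mulVecLin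
  have hnorm (x : Fin m → ℝ) : ∑ j, M.mulVec x j ^ 2 = ‖A x‖ ^ 2 :=
    (EuclideanSpace.real_norm_sq_eq (A x)).symm
  have hinner (a b : Fin m → ℝ) : ∑ i, (Mᵀ * M).mulVec a i * b i = ⟪A a, A b⟫ := by
    rw [EuclideanSpace.inner_eq_star_dotProduct, star_trivial, dotProduct_comm]
    exact M.transpose_mul_self_mulVec_dotProduct a b
  simp only [hnorm, hinner]
  exact hφconv.iInf_half_norm_sq_add_iSup_inner_sub_eq
    ((WithLp.linearEquiv 2 ℝ (Fin k → ℝ)).symm.injective.comp hM) u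

/-- Duality identity behind the convex CNC reformulation: for `φ : ℝᵐ → ℝ` convex and
`M` injective, for every `u`,
`inf_y ( (1/2)‖My‖₂² + φ*(MᵀM(u - y)) ) = (1/2)‖Mu‖₂² - inf_t ( φ(t) + (1/2)‖M(u-t)‖₂² )`,
where `φ*(s) = sup_t ( ⟨s, t⟩ - φ(t) )` is the convex conjugate (with values in `ℝ ∪ {+∞}`,
modeled in `EReal`). -/
theorem stmt8 (m k : ℕ) (hm : 1 ≤ m) (hk : 1 ≤ k)
    (φ : (Fin m → ℝ) → ℝ) (hφconv : ConvexOn ℝ Set.univ φ)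
    (M : Matrix (Fin k) (Fin m) ℝ)
    (hM : Function.Injective fun x : Fin m → ℝ => M.mulVec x)
    (u : Fin m → ℝ) :
    (⨅ y : Fin m → ℝ,
      (((1 / 2 * ∑ j, M.mulVec y j ^ 2 : ℝ) : EReal) +
        ⨆ t : Fin m → ℝ,
          (((∑ i, (Mᵀ * M).mulVec (u - y) i * t i) - φ t : ℝ) : EReal)))
    = ((1 / 2 * ∑ j, M.mulVec u j ^ 2
        - sInf (Set.range fun t : Fin m → ℝ =>
            φ t + 1 / 2 * ∑ j, M.mulVec (u - t) j ^ 2) : ℝ) : EReal) :=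
  stmt8_general m k φ hφconv M hM u
end

section
/- Let n₁, n₂ ≥ 1 and x : Fin n₁ → Fin n₂ → ℝ. Then the sum over all (i, j) with i + 1 < n₁ of (x_{i+1, j} − x_{i, j})², plus the sum over all (i, j) with j + 1 < n₂ of (x_{i, j+1} − x_{i, j})², is at most 8 · Σ_{i,j} x_{i,j}². (That is, the discrete 2D gradient operator D = [D_h; D_v] built from horizontal and vertical forward differences satisfies ‖D x‖₂² ≤ 8‖x‖₂², so its squared spectral norm is at most 8.) -/
lemma shift_sum_le (n : ℕ) (f : Fin n → ℝ) (hf : ∀ i, 0 ≤ f i) :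
    (∑ i : Fin n, if h : (i : ℕ) + 1 < n then f ⟨(i : ℕ) + 1, h⟩ else 0) ≤ ∑ i, f i := by
  classical
  have h1 : (∑ i : Fin n, if h : (i : ℕ) + 1 < n then f ⟨(i : ℕ) + 1, h⟩ else 0)
      = ∑ i : Fin n, if 1 ≤ (i : ℕ) then f i else 0 := by
    refine Finset.sum_nbij'
      (fun i => if h : (i : ℕ) + 1 < n then ⟨(i:ℕ)+1, h⟩ else ⟨0, i.pos⟩)
      (fun i => if _ : 1 ≤ (i : ℕ) then ⟨(i:ℕ)-1, by omega⟩ else ⟨n-1, by omega⟩)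
      (by simp) (by simp) ?_ ?_ ?_
    · intro a _
      rcases Nat.lt_or_ge ((a : ℕ) + 1) n with h | h
      · simp [h, Fin.ext_iff]
      · have : (a : ℕ) = n - 1 := by omega
        have hh0 : ¬ (n - 1 + 1 < n) := by omega
        simp [Nat.not_lt.mpr h, Fin.ext_iff, this, hh0]
    · intro a _
      rcases Nat.lt_or_ge 0 (a : ℕ) with h | h
      · have h' : 1 ≤ (a : ℕ) := h
        simp only [dif_pos h']
        have : (a : ℕ) - 1 + 1 < n := by omega
        simp [this, Fin.ext_iff]; omega
      · have h' : (a : ℕ) = 0 := by omega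
        have hn : ¬ (1 ≤ (a : ℕ)) := by omega
        have hh0 : ¬ (n - 1 + 1 < n) := by omega
        simp only [dif_neg hn]
        have hh : ¬ (n - 1 + 1 < n) := by omega
        simp [hh, Fin.ext_iff, h']
    · intro a _
      rcases Nat.lt_or_ge ((a : ℕ) + 1) n with h | h
      · simp [h]
      · simp [Nat.not_lt.mpr h]
  rw [h1]
  refine Finset.sum_le_sum fun i _ => ?_
  split <;> [exact le_refl _; exact hf i]

/-- The 2D discrete gradient operator `D = [D_h; D_v]` built from horizontal and vertical
forward differences satisfies `‖Dx‖₂² ≤ 8 ‖x‖₂²`, i.e. its squared spectral norm is at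
most 8. -/
theorem stmt10 (n₁ n₂ : ℕ) (hn₁ : 1 ≤ n₁) (hn₂ : 1 ≤ n₂) (x : Fin n₁ → Fin n₂ → ℝ) :
    (∑ i : Fin n₁, ∑ j : Fin n₂,
        if h : (i : ℕ) + 1 < n₁ then (x ⟨(i : ℕ) + 1, h⟩ j - x i j) ^ 2 else 0)
      + (∑ i : Fin n₁, ∑ j : Fin n₂,
        if h : (j : ℕ) + 1 < n₂ then (x i ⟨(j : ℕ) + 1, h⟩ - x i j) ^ 2 else 0)
      ≤ 8 * ∑ i : Fin n₁, ∑ j : Fin n₂, x i j ^ 2 := by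
  have sq : ∀ a b : ℝ, (a - b) ^ 2 ≤ 2 * a ^ 2 + 2 * b ^ 2 := by intro a b; nlinarith [sq_nonneg (a + b)]
  have hH : (∑ i : Fin n₁, ∑ j : Fin n₂,
        if h : (i : ℕ) + 1 < n₁ then (x ⟨(i : ℕ) + 1, h⟩ j - x i j) ^ 2 else 0)
      ≤ 4 * ∑ i : Fin n₁, ∑ j : Fin n₂, x i j ^ 2 := by
    have step : ∀ i : Fin n₁, ∀ j : Fin n₂,
        (if h : (i : ℕ) + 1 < n₁ then (x ⟨(i : ℕ) + 1, h⟩ j - x i j) ^ 2 else 0)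
        ≤ 2 * (if h : (i : ℕ) + 1 < n₁ then (x ⟨(i : ℕ) + 1, h⟩ j) ^ 2 else 0)
          + 2 * x i j ^ 2 := by
      intro i j
      split
      · exact sq _ _
      · positivity
    calc _ ≤ ∑ i : Fin n₁, ∑ j : Fin n₂,
          (2 * (if h : (i : ℕ) + 1 < n₁ then (x ⟨(i : ℕ) + 1, h⟩ j) ^ 2 else 0)
            + 2 * x i j ^ 2) := by
            exact Finset.sum_le_sum fun i _ => Finset.sum_le_sum fun j _ => step i j
      _ = 2 * (∑ i : Fin n₁, if h : (i : ℕ) + 1 < n₁ then (∑ j : Fin n₂, x ⟨(i : ℕ) + 1, h⟩ j ^ 2) else 0)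
          + 2 * ∑ i : Fin n₁, ∑ j : Fin n₂, x i j ^ 2 := by
            have e1 : ∀ i : Fin n₁,
                (∑ j : Fin n₂, (2 * (if h : (i : ℕ) + 1 < n₁ then (x ⟨(i : ℕ) + 1, h⟩ j) ^ 2 else 0)
                  + 2 * x i j ^ 2))
                = 2 * (if h : (i : ℕ) + 1 < n₁ then (∑ j : Fin n₂, x ⟨(i : ℕ) + 1, h⟩ j ^ 2) else 0)
                  + 2 * ∑ j : Fin n₂, x i j ^ 2 := by
              intro i
              rw [Finset.sum_add_distrib, ← Finset.mul_sum, ← Finset.mul_sum]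
              congr 2
              split <;> simp
            rw [Finset.sum_congr rfl fun i _ => e1 i, Finset.sum_add_distrib,
              ← Finset.mul_sum, ← Finset.mul_sum]
      _ ≤ 2 * (∑ i : Fin n₁, ∑ j : Fin n₂, x i j ^ 2)
          + 2 * ∑ i : Fin n₁, ∑ j : Fin n₂, x i j ^ 2 := by
            have h2 := shift_sum_le n₁ (fun i => ∑ j : Fin n₂, x i j ^ 2)
              (fun i => Finset.sum_nonneg fun j _ => sq_nonneg _)
            linarith
      _ ≤ 4 * ∑ i : Fin n₁, ∑ j : Fin n₂, x i j ^ 2 := by ring_nf; rfl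
  have hV : (∑ i : Fin n₁, ∑ j : Fin n₂,
        if h : (j : ℕ) + 1 < n₂ then (x i ⟨(j : ℕ) + 1, h⟩ - x i j) ^ 2 else 0)
      ≤ 4 * ∑ i : Fin n₁, ∑ j : Fin n₂, x i j ^ 2 := by
    have key : ∀ i : Fin n₁,
        (∑ j : Fin n₂, if h : (j : ℕ) + 1 < n₂ then (x i ⟨(j : ℕ) + 1, h⟩ - x i j) ^ 2 else 0)
        ≤ 4 * ∑ j : Fin n₂, x i j ^ 2 := by
      intro i
      calc _ ≤ ∑ j : Fin n₂,
            (2 * (if h : (j : ℕ) + 1 < n₂ then (x i ⟨(j : ℕ) + 1, h⟩) ^ 2 else 0) + 2 * x i j ^ 2) := by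
              refine Finset.sum_le_sum fun j _ => ?_
              split
              · exact sq _ _
              · positivity
        _ = 2 * (∑ j : Fin n₂, if h : (j : ℕ) + 1 < n₂ then (x i ⟨(j : ℕ) + 1, h⟩) ^ 2 else 0)
            + 2 * ∑ j : Fin n₂, x i j ^ 2 := by
              simp [Finset.sum_add_distrib, Finset.mul_sum]
        _ ≤ 2 * (∑ j : Fin n₂, x i j ^ 2) + 2 * ∑ j : Fin n₂, x i j ^ 2 := by
              have h2 := shift_sum_le n₂ (fun j => x i j ^ 2) (fun j => sq_nonneg _)
              linarith
        _ ≤ 4 * ∑ j : Fin n₂, x i j ^ 2 := by ring_nf; rfl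
    calc _ ≤ ∑ i : Fin n₁, 4 * ∑ j : Fin n₂, x i j ^ 2 :=
          Finset.sum_le_sum fun i _ => key i
      _ = 4 * ∑ i : Fin n₁, ∑ j : Fin n₂, x i j ^ 2 := by rw [Finset.mul_sum]
  linarith
end

section
/- Let n, m, k ≥ 1, λ > 0, o ∈ ℝⁿ, D an m×n real matrix, M a k×m real matrix, and g₁, g₂ : ℝᵐ → ℝ convex functions. If H = λIₙ − Dᵀ Mᵀ M D is positive definite and Mᵀ M is positive definite, then the function J̃(x, y) = (λ/2)‖x − o‖₂² − (1/2)‖M D x‖₂² + (1/2)‖M y‖₂² + g₁(D x) + g₂(Mᵀ M (D x − y)) attains its infimum on ℝⁿ × ℝᵐ at exactly one point, i.e. there exists a unique global minimizer (x*, y*) of J̃. -/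
/-!
Writing `z = (x, y)`, the objective is `½ (xᵀ H x + yᵀ MᵀM y)` plus an affine function plus
`g₁ ∘ D` plus `g₂` of a linear map of `z`: a positive definite quadratic form plus a convex
function. The form grows like `c ‖z‖²`, whereas a convex function decreases at most linearly, so
the sum is coercive and a minimizer exists; the form is strictly convex, so the minimizer is unique.
-/

open Set Filter Matrix

section Coercive

variable {E : Type*} [NormedAddCommGroup E] [NormedSpace ℝ E]

namespace QuadraticMap

theorem apply_smul_add_smul_of_add_eq_one {R M : Type*} [CommRing R] [AddCommGroup M] [Module R M]
    (Q : QuadraticForm R M) (x y : M) {a b : R} (hab : a + b = 1) :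
    Q (a • x + b • y) = a * Q x + b * Q y - a * b * Q (x - y) := by
  have hsum := QuadraticMap.map_add Q (a • x) (b • y)
  have hdiff := QuadraticMap.map_add Q x (-y)
  rw [polar_smul_left, polar_smul_right, QuadraticMap.map_smul, QuadraticMap.map_smul] at hsum
  rw [polar_neg_right, QuadraticMap.map_neg, ← sub_eq_add_neg] at hdiff
  rw [hsum, hdiff, smul_eq_mul, smul_eq_mul, smul_eq_mul, smul_eq_mul]
  linear_combination (a * Q x + b * Q y) * hab

theorem continuous_of_finiteDimensional [FiniteDimensional ℝ E] (Q : QuadraticForm ℝ E) :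
    Continuous Q := by
  have hB := (associated (R := ℝ) Q).toContinuousBilinearMap.continuous₂
  refine (hB.comp (continuous_id.prodMk continuous_id)).congr fun x => ?_
  exact associated_eq_self_apply ℝ Q x

theorem PosDef.strictConvexOn {Q : QuadraticForm ℝ E} (hQ : Q.PosDef) :
    StrictConvexOn ℝ univ Q := by
  refine ⟨convex_univ, fun x _ y _ hxy a b ha hb hab => ?_⟩
  rw [apply_smul_add_smul_of_add_eq_one Q x y hab, smul_eq_mul, smul_eq_mul]
  linarith [mul_pos (mul_pos ha hb) (hQ _ (sub_ne_zero.mpr hxy))]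

theorem PosDef.exists_mul_norm_sq_le [FiniteDimensional ℝ E] {Q : QuadraticForm ℝ E}
    (hQ : Q.PosDef) : ∃ c > 0, ∀ x, c * ‖x‖ ^ 2 ≤ Q x := by
  rcases subsingleton_or_nontrivial E with hE | hE
  · exact ⟨1, one_pos, fun x => by simp [Subsingleton.elim x 0]⟩
  obtain ⟨u₀, hu₀, hmin⟩ := (isCompact_sphere (0 : E) 1).exists_isMinOn
    (NormedSpace.sphere_nonempty.mpr zero_le_one) (continuous_of_finiteDimensional Q).continuousOn
  refine ⟨Q u₀, hQ u₀ (ne_zero_of_mem_unit_sphere ⟨u₀, hu₀⟩), fun x => ?_⟩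
  rcases eq_or_ne x 0 with rfl | hx
  · simp
  have hr : ‖x‖ ≠ 0 := norm_ne_zero_iff.mpr hx
  have hu : ‖x‖⁻¹ • x ∈ Metric.sphere (0 : E) 1 := by
    rw [mem_sphere_zero_iff_norm, norm_smul, norm_inv, norm_norm, inv_mul_cancel₀ hr]
  calc Q u₀ * ‖x‖ ^ 2 ≤ Q (‖x‖⁻¹ • x) * ‖x‖ ^ 2 := by gcongr; exact hmin hu
    _ = Q x := by rw [QuadraticMap.map_smul, smul_eq_mul]; field_simp

end QuadraticMap

theorem ConvexOn.exists_neg_mul_one_add_norm_le [FiniteDimensional ℝ E] {g : E → ℝ}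
    (hg : ConvexOn ℝ univ g) : ∃ C, ∀ z, -(C * (1 + ‖z‖)) ≤ g z := by
  obtain ⟨u₀, -, hmin⟩ := (isCompact_closedBall (0 : E) 1).exists_isMinOn
    (Metric.nonempty_closedBall.mpr zero_le_one) hg.locallyLipschitz.continuous.continuousOn
  have hball : ∀ u, ‖u‖ ≤ 1 → g u₀ ≤ g u := fun u hu => hmin (mem_closedBall_zero_iff.mpr hu)
  refine ⟨|g u₀| + |g 0|, fun z => ?_⟩
  rcases le_or_gt ‖z‖ 1 with hz | hz
  · nlinarith [hball z hz, neg_abs_le (g u₀), abs_nonneg (g 0), norm_nonneg z, abs_nonneg (g u₀)]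
  have hr : 0 < ‖z‖ := one_pos.trans hz
  set t := ‖z‖⁻¹
  have ht : 0 < t := inv_pos.mpr hr
  have htz : t * ‖z‖ = 1 := inv_mul_cancel₀ hr.ne'
  have hconv := hg.2 (mem_univ z) (mem_univ 0) ht.le
    (sub_nonneg.mpr (inv_le_one_of_one_le₀ hz.le)) (add_sub_cancel t 1)
  rw [smul_zero, add_zero, smul_eq_mul, smul_eq_mul] at hconv
  have hu := hball (t • z) (by rw [norm_smul, Real.norm_of_nonneg ht.le, htz])
  have key : ‖z‖ * g u₀ ≤ g z + (‖z‖ - 1) * g 0 :=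
    calc ‖z‖ * g u₀ ≤ ‖z‖ * (t * g z + (1 - t) * g 0) := by gcongr; exact hu.trans hconv
      _ = g z + (‖z‖ - 1) * g 0 := by linear_combination (g z - g 0) * htz
  nlinarith [mul_le_mul_of_nonneg_left (neg_abs_le (g u₀)) hr.le,
    mul_le_mul_of_nonneg_left (le_abs_self (g 0)) (sub_nonneg.mpr hz.le), abs_nonneg (g 0),
    abs_nonneg (g u₀)]

theorem QuadraticMap.PosDef.tendsto_add_cocompact [FiniteDimensional ℝ E]
    {Q : QuadraticForm ℝ E} (hQ : Q.PosDef) {h : E → ℝ} (hh : ConvexOn ℝ univ h) :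
    Tendsto (fun z => Q z + h z) (cocompact E) atTop := by
  obtain ⟨c, hc, hQc⟩ := hQ.exists_mul_norm_sq_le
  obtain ⟨C, hC⟩ := hh.exists_neg_mul_one_add_norm_le
  have hgrowth : Tendsto (fun t : ℝ => t * (c * t - C) - C) atTop atTop :=
    tendsto_atTop_add_const_right _ _ (tendsto_id.atTop_mul_atTop₀
      (tendsto_atTop_add_const_right _ _ (tendsto_id.const_mul_atTop hc)))
  refine tendsto_atTop_mono (fun z => ?_) (hgrowth.comp tendsto_norm_cocompact_atTop)
  simp only [Function.comp_apply]
  linarith [hQc z, hC z]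

theorem QuadraticMap.PosDef.existsUnique_forall_add_le [FiniteDimensional ℝ E]
    {Q : QuadraticForm ℝ E} (hQ : Q.PosDef) {h : E → ℝ} (hh : ConvexOn ℝ univ h) :
    ∃! p, ∀ q, Q p + h p ≤ Q q + h q := by
  obtain ⟨p, hp⟩ := ((continuous_of_finiteDimensional Q).add hh.locallyLipschitz.continuous
    ).exists_forall_le (hQ.tendsto_add_cocompact hh)
  refine ⟨p, hp, fun q hq => ?_⟩
  exact (hQ.strictConvexOn.add_convexOn hh).eq_of_isMinOn (fun r _ => hq r) (fun r _ => hp r)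
    (mem_univ q) (mem_univ p)

end Coercive

section Objective

variable {ι κ μ : Type*} [Fintype ι] [Fintype κ] [Fintype μ]

theorem Matrix.dotProduct_transpose_mul_self_mulVec (B : Matrix μ ι ℝ) (x : ι → ℝ) :
    x ⬝ᵥ (Bᵀ * B) *ᵥ x = (B *ᵥ x) ⬝ᵥ (B *ᵥ x) := by
  rw [← mulVec_mulVec, dotProduct_mulVec, vecMul_transpose]

theorem sum_sq_eq_dotProduct_self (v : ι → ℝ) : ∑ i, v i ^ 2 = v ⬝ᵥ v := by
  simp only [dotProduct, sq]

theorem objective_quadraticPart_eq [DecidableEq ι] (lam : ℝ) (o : ι → ℝ) (D : Matrix κ ι ℝ)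
    (M : Matrix μ κ ℝ) (x : ι → ℝ) (y : κ → ℝ) :
    lam / 2 * ∑ i, (x i - o i) ^ 2 - 1 / 2 * ∑ j, M.mulVec (D.mulVec x) j ^ 2
        + 1 / 2 * ∑ j, M.mulVec y j ^ 2
      = 2⁻¹ * (x ⬝ᵥ (lam • (1 : Matrix ι ι ℝ) - Dᵀ * Mᵀ * M * D) *ᵥ x + y ⬝ᵥ (Mᵀ * M) *ᵥ y)
        + lam * (2⁻¹ * (o ⬝ᵥ o) - x ⬝ᵥ o) := by
  have hMD : Dᵀ * Mᵀ * M * D = (M * D)ᵀ * (M * D) := by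
    simp only [transpose_mul, Matrix.mul_assoc]
  have hsq : ∑ i, (x i - o i) ^ 2 = x ⬝ᵥ x - 2 * (x ⬝ᵥ o) + o ⬝ᵥ o := by
    simp only [dotProduct, Finset.mul_sum, ← Finset.sum_sub_distrib, ← Finset.sum_add_distrib]
    exact Finset.sum_congr rfl fun i _ => by ring
  rw [hsq, sum_sq_eq_dotProduct_self, sum_sq_eq_dotProduct_self, sub_mulVec, dotProduct_sub,
    smul_mulVec, one_mulVec, dotProduct_smul, smul_eq_mul, hMD,
    dotProduct_transpose_mul_self_mulVec, dotProduct_transpose_mul_self_mulVec, ← mulVec_mulVec]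
  ring

theorem convexOn_objective_remainder {ν : Type*} [Fintype ν] (lam : ℝ) (o : ι → ℝ)
    (D : Matrix κ ι ℝ) (A : Matrix ν κ ℝ) {g₁ : (κ → ℝ) → ℝ} {g₂ : (ν → ℝ) → ℝ}
    (hg₁ : ConvexOn ℝ univ g₁) (hg₂ : ConvexOn ℝ univ g₂) :
    ConvexOn ℝ univ fun p : (ι → ℝ) × (κ → ℝ) => lam * (2⁻¹ * (o ⬝ᵥ o) - p.1 ⬝ᵥ o)
      + g₁ (D *ᵥ p.1) + g₂ (A *ᵥ (D *ᵥ p.1 - p.2)) := by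
  have haffine :
      ConvexOn ℝ univ fun p : (ι → ℝ) × (κ → ℝ) => lam * (2⁻¹ * (o ⬝ᵥ o) - p.1 ⬝ᵥ o) := by
    refine ⟨convex_univ, fun p _ q _ a b _ _ hab => le_of_eq ?_⟩
    simp only [Prod.fst_add, Prod.smul_fst, add_dotProduct, smul_dotProduct, smul_eq_mul]
    linear_combination (-(lam * 2⁻¹ * (o ⬝ᵥ o))) * hab
  let fst := LinearMap.fst ℝ (ι → ℝ) (κ → ℝ)
  have h₁ := hg₁.comp_linearMap (D.mulVecLin ∘ₗ fst)
  have h₂ := hg₂.comp_linearMap (A.mulVecLin ∘ₗ (D.mulVecLin ∘ₗ fst - LinearMap.snd ℝ _ _))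
  exact (haffine.add h₁).add h₂

end Objective

theorem stmt19_general (n m k : ℕ)
    (lam : ℝ) (o : Fin n → ℝ)
    (D : Matrix (Fin m) (Fin n) ℝ) (M : Matrix (Fin k) (Fin m) ℝ)
    (g₁ g₂ : (Fin m → ℝ) → ℝ)
    (hg₁ : ConvexOn ℝ Set.univ g₁) (hg₂ : ConvexOn ℝ Set.univ g₂)
    (hH : (lam • (1 : Matrix (Fin n) (Fin n) ℝ) - Dᵀ * Mᵀ * M * D).PosDef)
    (hM : (Mᵀ * M).PosDef) :
    ∃! p : (Fin n → ℝ) × (Fin m → ℝ),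
      ∀ q : (Fin n → ℝ) × (Fin m → ℝ),
        (lam / 2 * ∑ i, (p.1 i - o i) ^ 2 - 1 / 2 * ∑ j, M.mulVec (D.mulVec p.1) j ^ 2
          + 1 / 2 * ∑ j, M.mulVec p.2 j ^ 2 + g₁ (D.mulVec p.1)
          + g₂ ((Mᵀ * M).mulVec (D.mulVec p.1 - p.2)))
        ≤ (lam / 2 * ∑ i, (q.1 i - o i) ^ 2 - 1 / 2 * ∑ j, M.mulVec (D.mulVec q.1) j ^ 2
          + 1 / 2 * ∑ j, M.mulVec q.2 j ^ 2 + g₁ (D.mulVec q.1)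
          + g₂ ((Mᵀ * M).mulVec (D.mulVec q.1 - q.2))) := by
  have hQ := (hH.toQuadraticForm'.prod hM.toQuadraticForm').smul (inv_pos.mpr two_pos)
  have key :=
    hQ.existsUnique_forall_add_le (convexOn_objective_remainder lam o D (Mᵀ * M) hg₁ hg₂)
  simp only [objective_quadraticPart_eq]
  simpa only [_root_.smul_apply, QuadraticMap.prod_apply, Matrix.toQuadraticForm',
    LinearMap.BilinMap.toQuadraticMap_apply, toLinearMap₂'_apply', smul_eq_mul, add_assoc] using key

/-- If `H = λIₙ - DᵀMᵀMD` and `MᵀM` are positive definite and `g₁, g₂` are convex, then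
`J̃(x,y) = (λ/2)‖x-o‖₂² - (1/2)‖MDx‖₂² + (1/2)‖My‖₂² + g₁(Dx) + g₂(MᵀM(Dx - y))`
has exactly one global minimizer on `ℝⁿ × ℝᵐ`. -/
theorem stmt19 (n m k : ℕ) (hn : 1 ≤ n) (hm : 1 ≤ m) (hk : 1 ≤ k)
    (lam : ℝ) (hlam : 0 < lam) (o : Fin n → ℝ)
    (D : Matrix (Fin m) (Fin n) ℝ) (M : Matrix (Fin k) (Fin m) ℝ)
    (g₁ g₂ : (Fin m → ℝ) → ℝ)
    (hg₁ : ConvexOn ℝ Set.univ g₁) (hg₂ : ConvexOn ℝ Set.univ g₂)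
    (hH : (lam • (1 : Matrix (Fin n) (Fin n) ℝ) - Dᵀ * Mᵀ * M * D).PosDef)
    (hM : (Mᵀ * M).PosDef) :
    ∃! p : (Fin n → ℝ) × (Fin m → ℝ),
      ∀ q : (Fin n → ℝ) × (Fin m → ℝ),
        (lam / 2 * ∑ i, (p.1 i - o i) ^ 2 - 1 / 2 * ∑ j, M.mulVec (D.mulVec p.1) j ^ 2
          + 1 / 2 * ∑ j, M.mulVec p.2 j ^ 2 + g₁ (D.mulVec p.1)
          + g₂ ((Mᵀ * M).mulVec (D.mulVec p.1 - p.2)))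
        ≤ (lam / 2 * ∑ i, (q.1 i - o i) ^ 2 - 1 / 2 * ∑ j, M.mulVec (D.mulVec q.1) j ^ 2
          + 1 / 2 * ∑ j, M.mulVec q.2 j ^ 2 + g₁ (D.mulVec q.1)
          + g₂ ((Mᵀ * M).mulVec (D.mulVec q.1 - q.2))) :=
  stmt19_general n m k lam o D M g₁ g₂ hg₁ hg₂ hH hM
end
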